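/- Let h be a finite dimensional Leibniz algebra. For any commutative bialgebra B and any Leibniz algebra homomorphism f : h → h ⊗ B which makes h into a right B-comodule, there exists a unique bialgebra homomorphism θ : A(h) → B with f = (Id_h ⊗ θ) ∘ η_h. -/

import Mathlib

/-!
Write `f(e_i) = Σ_s e_s ⊗ b_{si}`. That `f` preserves brackets says exactly that the matrix
`(b_{si})` satisfies the defining relations of `A(h)`, so `x_{si} ↦ b_{si}` is a well-defined
algebra map `θ`, and it is the only one with `(Id ⊗ θ) ∘ η = f` since the `x_{si}` generate.
Coassociativity and counitality of `f` read `Δ(b_{si}) = Σ_t b_{st} ⊗ b_{ti}` and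
`ε(b_{si}) = δ_{si}`, which is what makes `θ` compatible with `Δ` and `ε` on generators.
-/

open TensorProduct MvPolynomial

/-- The universal polynomial `P_{(a,i,j)} = Σ_u β^u_{ij} X_{au} - Σ_{s,t} τ^a_{st} X_{si} X_{tj}`. -/
noncomputable def univPoly {k : Type*} [Field k] {n : ℕ} {I : Type*}
    (τ : Fin n → Fin n → Fin n → k) (β : I → I → I →₀ k)
    (a : Fin n) (i j : I) : MvPolynomial (Fin n × I) k :=
  (β i j).sum (fun u c => C c * X (a, u)) -
    ∑ s : Fin n, ∑ t : Fin n, C (τ s t a) * X (s, i) * X (t, j)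

/-- The ideal generated by the universal polynomials. -/
noncomputable def univIdeal {k : Type*} [Field k] {n : ℕ} {I : Type*}
    (τ : Fin n → Fin n → Fin n → k) (β : I → I → I →₀ k) :
    Ideal (MvPolynomial (Fin n × I) k) :=
  Ideal.span (Set.range fun p : Fin n × I × I => univPoly τ β p.1 p.2.1 p.2.2)

/-- The universal algebra `A(h,g)`. -/
noncomputable abbrev univAlg {k : Type*} [Field k] {n : ℕ} {I : Type*}
    (τ : Fin n → Fin n → Fin n → k) (β : I → I → I →₀ k) :=
  MvPolynomial (Fin n × I) k ⧸ univIdeal τ β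

/-- The generator `x_{si}` of `A(h,g)`. -/
noncomputable def univGen {k : Type*} [Field k] {n : ℕ} {I : Type*}
    (τ : Fin n → Fin n → Fin n → k) (β : I → I → I →₀ k)
    (s : Fin n) (i : I) : univAlg τ β :=
  Ideal.Quotient.mk (univIdeal τ β) (X (s, i))

/-- The universal ideal of a single `n`-dimensional Leibniz algebra `h`
(with structure constants `τ`), inside `M(n) = k[X_{ij}]`. -/
noncomputable abbrev univIdealH {k : Type*} [Field k] {n : ℕ}
    (τ : Fin n → Fin n → Fin n → k) : Ideal (MvPolynomial (Fin n × Fin n) k) :=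
  univIdeal τ (fun i j => Finsupp.equivFunOnFinite.symm (τ i j))

/-- The universal algebra `A(h) = A(h,h)` of an `n`-dimensional Leibniz algebra. -/
noncomputable abbrev univAlgH {k : Type*} [Field k] {n : ℕ}
    (τ : Fin n → Fin n → Fin n → k) :=
  univAlg τ (fun i j => Finsupp.equivFunOnFinite.symm (τ i j))

/-- The generator `x_{ij}` of `A(h)`. -/
noncomputable abbrev univGenH {k : Type*} [Field k] {n : ℕ}
    (τ : Fin n → Fin n → Fin n → k) (i j : Fin n) : univAlgH τ :=
  univGen τ (fun i j => Finsupp.equivFunOnFinite.symm (τ i j)) i j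

/-- The comultiplication of the matrix bialgebra `M(n) = k[X_{ij}]`:
`Δ(X_{ij}) = Σ_s X_{is} ⊗ X_{sj}`. -/
noncomputable def deltaM (k : Type*) [Field k] (n : ℕ) :
    MvPolynomial (Fin n × Fin n) k →ₐ[k]
      MvPolynomial (Fin n × Fin n) k ⊗[k] MvPolynomial (Fin n × Fin n) k :=
  MvPolynomial.aeval (fun p : Fin n × Fin n =>
    ∑ s : Fin n, MvPolynomial.X (p.1, s) ⊗ₜ[k] MvPolynomial.X (s, p.2))

/-- The counit of the matrix bialgebra `M(n)`: `ε(X_{ij}) = δ_{ij}`. -/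
noncomputable def epsM (k : Type*) [Field k] (n : ℕ) :
    MvPolynomial (Fin n × Fin n) k →ₐ[k] k :=
  MvPolynomial.aeval (fun p : Fin n × Fin n => if p.1 = p.2 then 1 else 0)

namespace PiTensor

variable {R : Type*} [CommSemiring R] {ι : Type*} {M : Type*} [AddCommMonoid M] [Module R M]

variable (R M) in
noncomputable def coord (s : ι) : (ι → R) ⊗[R] M →ₗ[R] M :=
  (TensorProduct.lid R M).toLinearMap ∘ₗ TensorProduct.map (LinearMap.proj s) LinearMap.id

@[simp]
lemma coord_tmul (s : ι) (x : ι → R) (m : M) : coord R M s (x ⊗ₜ m) = x s • m := rfl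

lemma coord_map_id {N : Type*} [AddCommMonoid N] [Module R N] (φ : M →ₗ[R] N) (s : ι)
    (v : (ι → R) ⊗[R] M) :
    coord R N s (TensorProduct.map LinearMap.id φ v) = φ (coord R M s v) := by
  induction v using TensorProduct.induction_on with
  | zero => simp
  | tmul x m => simp
  | add x y hx hy => simp only [map_add, hx, hy]

variable [DecidableEq ι]

noncomputable def matrixCoeff (f : (ι → R) →ₗ[R] (ι → R) ⊗[R] M) (s i : ι) : M :=
  coord R M s (f (Pi.single i 1))

lemma matrixCoeff_map_id_comp {N : Type*} [AddCommMonoid N] [Module R N]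
    (φ : M →ₗ[R] N) (f : (ι → R) →ₗ[R] (ι → R) ⊗[R] M) (s i : ι) :
    matrixCoeff (TensorProduct.map LinearMap.id φ ∘ₗ f) s i = φ (matrixCoeff f s i) :=
  coord_map_id φ s _

variable [Fintype ι]

@[simp]
lemma coord_sum_single_tmul (a : ι) (g : ι → M) :
    coord R M a (∑ s, Pi.single s 1 ⊗ₜ[R] g s) = g a := by
  simp [Pi.single_apply, ite_smul]

lemma sum_single_tmul_coord (v : (ι → R) ⊗[R] M) :
    ∑ s, Pi.single s 1 ⊗ₜ[R] coord R M s v = v := by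
  induction v using TensorProduct.induction_on with
  | zero => simp
  | tmul x m =>
    simp only [coord_tmul, TensorProduct.tmul_smul, TensorProduct.smul_tmul',
      ← TensorProduct.sum_tmul, ← Pi.single_smul, smul_eq_mul, mul_one, Finset.univ_sum_single]
  | add x y hx hy => simp only [map_add, TensorProduct.tmul_add, Finset.sum_add_distrib, hx, hy]

lemma apply_single_eq_sum_matrixCoeff (f : (ι → R) →ₗ[R] (ι → R) ⊗[R] M) (i : ι) :
    f (Pi.single i 1) = ∑ s, Pi.single s 1 ⊗ₜ[R] matrixCoeff f s i :=
  (sum_single_tmul_coord _).symm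

lemma coord_apply_eq_sum_matrixCoeff (f : (ι → R) →ₗ[R] (ι → R) ⊗[R] M) (a : ι) (v : ι → R) :
    coord R M a (f v) = ∑ u, v u • matrixCoeff f a u := by
  conv_lhs => rw [← Finset.univ_sum_single v]
  simp only [map_sum, matrixCoeff, ← map_smul, ← Pi.single_smul, smul_eq_mul, mul_one]

lemma matrixCoeff_injective :
    Function.Injective (matrixCoeff : ((ι → R) →ₗ[R] (ι → R) ⊗[R] M) → ι → ι → M) := by
  intro f g h
  refine (Pi.basisFun R ι).ext fun i => ?_
  rw [Pi.basisFun_apply, apply_single_eq_sum_matrixCoeff, apply_single_eq_sum_matrixCoeff, h]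

lemma matrixCoeff_relation_of_map_bracket {A : Type*} [Semiring A] [Algebra R A]
    (τ : ι → ι → ι → R) (bH : (ι → R) →ₗ[R] (ι → R) →ₗ[R] (ι → R))
    (hbH : ∀ i j, bH (Pi.single i 1) (Pi.single j 1) = fun s => τ i j s)
    (BB : (ι → R) ⊗[R] A →ₗ[R] (ι → R) ⊗[R] A →ₗ[R] (ι → R) ⊗[R] A)
    (hBB : ∀ (x y : ι → R) (a c : A), BB (x ⊗ₜ[R] a) (y ⊗ₜ[R] c) = bH x y ⊗ₜ[R] (a * c))
    (f : (ι → R) →ₗ[R] (ι → R) ⊗[R] A) (hf : ∀ u v, f (bH u v) = BB (f u) (f v)) (a i j : ι) :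
    ∑ u, τ i j u • matrixCoeff f a u =
      ∑ s, ∑ t, τ s t a • (matrixCoeff f s i * matrixCoeff f t j) := by
  have h := congrArg (coord R A a) (hf (Pi.single i 1) (Pi.single j 1))
  rw [hbH, coord_apply_eq_sum_matrixCoeff, apply_single_eq_sum_matrixCoeff f i,
    apply_single_eq_sum_matrixCoeff f j] at h
  simp only [map_sum, LinearMap.sum_apply, hBB, hbH, coord_tmul] at h
  rw [h, Finset.sum_comm]

lemma counit_matrixCoeff {C : Type*} [AddCommMonoid C] [Module R C] [Coalgebra R C]
    (f : (ι → R) →ₗ[R] (ι → R) ⊗[R] C)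
    (hcounit : ∀ v, TensorProduct.rid R (ι → R)
      (TensorProduct.map LinearMap.id (Coalgebra.counit (R := R) (A := C)) (f v)) = v)
    (s i : ι) :
    Coalgebra.counit (R := R) (matrixCoeff f s i) = if s = i then 1 else 0 := by
  have h := congrFun (hcounit (Pi.single i 1)) s
  rw [apply_single_eq_sum_matrixCoeff] at h
  simpa [Finset.sum_apply, Pi.single_apply] using h

lemma comul_matrixCoeff {C : Type*} [AddCommMonoid C] [Module R C] [Coalgebra R C]
    (f : (ι → R) →ₗ[R] (ι → R) ⊗[R] C)
    (hcoassoc : ∀ v, TensorProduct.assoc R (ι → R) C C (TensorProduct.map f LinearMap.id (f v)) =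
      TensorProduct.map LinearMap.id (Coalgebra.comul (R := R) (A := C)) (f v))
    (s i : ι) :
    Coalgebra.comul (R := R) (matrixCoeff f s i) = ∑ t, matrixCoeff f s t ⊗ₜ matrixCoeff f t i := by
  have h := congrArg (coord R (C ⊗[R] C) s) (hcoassoc (Pi.single i 1))
  rw [coord_map_id] at h
  rw [matrixCoeff, ← h, apply_single_eq_sum_matrixCoeff f i]
  simp [apply_single_eq_sum_matrixCoeff f, TensorProduct.sum_tmul, Pi.single_apply, ite_smul]

end PiTensor

namespace univAlg

variable {k : Type*} [Field k] {n : ℕ} {I : Type*} {τ : Fin n → Fin n → Fin n → k}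
  {β : I → I → I →₀ k}

lemma aeval_univPoly {A : Type*} [CommRing A] [Algebra k A] (b : Fin n × I → A) (a : Fin n)
    (i j : I) :
    aeval b (univPoly τ β a i j) =
      (β i j).sum (fun u c => c • b (a, u)) - ∑ s, ∑ t, τ s t a • (b (s, i) * b (t, j)) := by
  simp only [univPoly, map_sub, map_finsuppSum, map_sum, map_mul, aeval_C, aeval_X,
    Algebra.smul_def, mul_assoc]

variable {A : Type*} [CommSemiring A] [Algebra k A]

noncomputable def lift (b : Fin n → I → A)
    (hb : ∀ a i j, aeval (fun p => b p.1 p.2) (univPoly τ β a i j) = 0) : univAlg τ β →ₐ[k] A :=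
  Ideal.Quotient.liftₐ _ (aeval fun p => b p.1 p.2) fun _ hp =>
    Ideal.span_le (I := RingHom.ker (aeval fun p : Fin n × I => b p.1 p.2))
      |>.2 (by rintro _ ⟨⟨a, i, j⟩, rfl⟩; exact hb a i j) hp

@[simp]
lemma lift_univGen (b : Fin n → I → A)
    (hb : ∀ a i j, aeval (fun p => b p.1 p.2) (univPoly τ β a i j) = 0) (s : Fin n) (i : I) :
    lift b hb (univGen τ β s i) = b s i :=
  (Ideal.Quotient.lift_mk _ _ _).trans (aeval_X _ _)

@[ext]
lemma algHom_ext {φ ψ : univAlg τ β →ₐ[k] A}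
    (h : ∀ s i, φ (univGen τ β s i) = ψ (univGen τ β s i)) : φ = ψ :=
  Ideal.Quotient.algHom_ext _ <| MvPolynomial.algHom_ext fun p => h p.1 p.2

end univAlg

namespace univAlgH

variable {k : Type*} [Field k] {n : ℕ} {τ : Fin n → Fin n → Fin n → k}

lemma aeval_univPoly_eq_zero {A : Type*} [CommRing A] [Algebra k A] {b : Fin n → Fin n → A}
    (hb : ∀ a i j, ∑ u, τ i j u • b a u = ∑ s, ∑ t, τ s t a • (b s i * b t j)) (a i j : Fin n) :
    aeval (fun p => b p.1 p.2)
      (univPoly τ (fun i j => Finsupp.equivFunOnFinite.symm (τ i j)) a i j) = 0 := by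
  rw [univAlg.aeval_univPoly, Finsupp.sum_fintype _ _ fun _ => by simp, sub_eq_zero]
  exact hb a i j

lemma map_id_comp_eq_iff {η : (Fin n → k) →ₗ[k] (Fin n → k) ⊗[k] univAlgH τ}
    (hη : ∀ i, η (Pi.single i 1) = ∑ s, Pi.single s 1 ⊗ₜ[k] univGenH τ s i)
    {M : Type*} [AddCommMonoid M] [Module k M] (φ : univAlgH τ →ₗ[k] M)
    (f : (Fin n → k) →ₗ[k] (Fin n → k) ⊗[k] M) :
    TensorProduct.map LinearMap.id φ ∘ₗ η = f ↔
      ∀ s i, φ (univGenH τ s i) = PiTensor.matrixCoeff f s i := by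
  have hηcoeff (s i) : PiTensor.matrixCoeff η s i = univGenH τ s i := by
    rw [PiTensor.matrixCoeff, hη, PiTensor.coord_sum_single_tmul]
  simp only [← PiTensor.matrixCoeff_injective.eq_iff, funext_iff,
    PiTensor.matrixCoeff_map_id_comp, hηcoeff]

variable {B : Type*} [CommSemiring B] [Bialgebra k B]

lemma comul_comp_eq_map_comp_of_generators {ΔA : univAlgH τ →ₐ[k] univAlgH τ ⊗[k] univAlgH τ}
    (hΔ : ∀ i j, ΔA (univGenH τ i j) = ∑ s, univGenH τ i s ⊗ₜ[k] univGenH τ s j)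
    {θ : univAlgH τ →ₐ[k] B}
    (hθ : ∀ i j, Coalgebra.comul (R := k) (θ (univGenH τ i j)) =
      ∑ s, θ (univGenH τ i s) ⊗ₜ[k] θ (univGenH τ s j)) :
    Coalgebra.comul (R := k) (A := B) ∘ₗ θ.toLinearMap =
      TensorProduct.map θ.toLinearMap θ.toLinearMap ∘ₗ ΔA.toLinearMap := by
  have h : (Bialgebra.comulAlgHom k B).comp θ = (Algebra.TensorProduct.map θ θ).comp ΔA :=
    univAlg.algHom_ext fun i j => by simp [hΔ, hθ]
  exact congrArg AlgHom.toLinearMap h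

lemma counit_comp_eq_of_generators {εA : univAlgH τ →ₐ[k] k}
    (hε : ∀ i j, εA (univGenH τ i j) = if i = j then 1 else 0) {θ : univAlgH τ →ₐ[k] B}
    (hθ : ∀ i j, Coalgebra.counit (R := k) (θ (univGenH τ i j)) = if i = j then 1 else 0) :
    Coalgebra.counit (R := k) (A := B) ∘ₗ θ.toLinearMap = εA.toLinearMap :=
  congrArg AlgHom.toLinearMap <| univAlg.algHom_ext (φ := (Bialgebra.counitAlgHom k B).comp θ)
    fun i j => by simp [hε, hθ]

end univAlgH

theorem stmt_14 (k : Type*) [Field k] (n : ℕ) (τ : Fin n → Fin n → Fin n → k)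
    (bH : (Fin n → k) →ₗ[k] (Fin n → k) →ₗ[k] (Fin n → k))
    (hbH : ∀ i j : Fin n, bH (Pi.single i 1) (Pi.single j 1) = fun s => τ i j s)
    (ΔA : univAlgH τ →ₐ[k] univAlgH τ ⊗[k] univAlgH τ) (εA : univAlgH τ →ₐ[k] k)
    (hΔ : ∀ i j : Fin n, ΔA (univGenH τ i j) =
      ∑ s : Fin n, univGenH τ i s ⊗ₜ[k] univGenH τ s j)
    (hε : ∀ i j : Fin n, εA (univGenH τ i j) = if i = j then 1 else 0)
    (η : (Fin n → k) →ₗ[k] (Fin n → k) ⊗[k] univAlgH τ)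
    (hη : ∀ i : Fin n, η (Pi.single i 1) =
      ∑ s : Fin n, Pi.single s 1 ⊗ₜ[k] univGenH τ s i)
    (B : Type*) [CommRing B] [Bialgebra k B]
    (BB : (Fin n → k) ⊗[k] B →ₗ[k] (Fin n → k) ⊗[k] B →ₗ[k] (Fin n → k) ⊗[k] B)
    (hBB : ∀ (x y : Fin n → k) (a c : B),
      BB (x ⊗ₜ[k] a) (y ⊗ₜ[k] c) = bH x y ⊗ₜ[k] (a * c))
    (f : (Fin n → k) →ₗ[k] (Fin n → k) ⊗[k] B)
    (hf : ∀ u v : Fin n → k, f (bH u v) = BB (f u) (f v))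
    (hcoassoc : ∀ v : Fin n → k,
      (TensorProduct.assoc k (Fin n → k) B B) ((TensorProduct.map f LinearMap.id) (f v)) =
        (TensorProduct.map LinearMap.id (Coalgebra.comul (R := k) (A := B))) (f v))
    (hcounit : ∀ v : Fin n → k,
      (TensorProduct.rid k (Fin n → k))
        ((TensorProduct.map LinearMap.id (Coalgebra.counit (R := k) (A := B))) (f v)) = v) :
    ∃! θ : univAlgH τ →ₐ[k] B,
      (Coalgebra.comul (R := k) (A := B) ∘ₗ θ.toLinearMap =
        TensorProduct.map θ.toLinearMap θ.toLinearMap ∘ₗ ΔA.toLinearMap) ∧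
      (Coalgebra.counit (R := k) (A := B) ∘ₗ θ.toLinearMap = εA.toLinearMap) ∧
      TensorProduct.map LinearMap.id θ.toLinearMap ∘ₗ η = f := by
  set b := PiTensor.matrixCoeff f
  let θ := univAlg.lift b (univAlgH.aeval_univPoly_eq_zero
    (PiTensor.matrixCoeff_relation_of_map_bracket τ bH hbH BB hBB f hf))
  have hθ (s i : Fin n) : θ (univGenH τ s i) = b s i := univAlg.lift_univGen _ _ s i
  refine ⟨θ, ⟨?_, ?_, (univAlgH.map_id_comp_eq_iff hη θ.toLinearMap f).2 hθ⟩, ?_⟩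
  · refine univAlgH.comul_comp_eq_map_comp_of_generators hΔ fun i j => ?_
    simp only [hθ, b, PiTensor.comul_matrixCoeff f hcoassoc]
  · refine univAlgH.counit_comp_eq_of_generators hε fun i j => ?_
    rw [hθ, PiTensor.counit_matrixCoeff f hcounit]
  · rintro θ' ⟨-, -, hθ'⟩
    exact univAlg.algHom_ext fun s i =>
      ((univAlgH.map_id_comp_eq_iff hη θ'.toLinearMap f).1 hθ' s i).trans (hθ s i).symm
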